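/- arXiv:2504.07700 — 3 statements merged into one kernel-verified Lean document; each statement's English description precedes it below -/
import Mathlib

section
/- Let M = (m_ij) be a symmetric real n×n matrix with zero diagonal and nonnegative off-diagonal entries. Then M is conditionally negative semidefinite if and only if there exist vectors x_1, …, x_n ∈ ℝ^n such that m_ij = ‖x_i − x_j‖₂² for all i,j. -/
/-!
Fix a base point `b`. The matrix `G i j = (M i b + M j b - M i j) / 2` equals `-½ Qᵀ M Q`, where
`Q c = c - (∑ i, c i) • Pi.single b 1` projects onto the hyperplane `∑ i, c i = 0`; hence `M` is
conditionally negative semidefinite exactly when `G` is positive semidefinite. A positive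
semidefinite matrix is a Gram matrix `G i j = ⟪x i, x j⟫`, and then
`‖x i - x j‖² = G i i + G j j - 2 G i j = M i j`. Conversely, for `∑ i, c i = 0` one has
`∑ i j, ‖x i - x j‖² c i c j = -2 ‖∑ i, c i • x i‖²`.
-/

open scoped InnerProductSpace MatrixOrder ComplexOrder

namespace Matrix

variable {ι : Type*}

/-- If `M i j = ‖x i - x j‖ ^ 2`, this is the Gram matrix of the vectors `x i - x b`. -/
noncomputable def basedGram (M : Matrix ι ι ℝ) (b : ι) : Matrix ι ι ℝ :=
  of fun i j => (M i b + M j b - M i j) / 2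

variable {M : Matrix ι ι ℝ}

lemma isHermitian_basedGram (hM : M.IsSymm) (b : ι) : (basedGram M b).IsHermitian := by
  ext i j
  simp [basedGram, hM.apply i j]
  ring

lemma basedGram_add_basedGram_sub (hdiag : ∀ i, M i i = 0) (b i j : ι) :
    basedGram M b i i + basedGram M b j j - 2 * basedGram M b i j = M i j := by
  simp [basedGram, hdiag]
  ring

variable [Fintype ι]

def CondNegSemidef (M : Matrix ι ι ℝ) : Prop :=
  ∀ c : ι → ℝ, ∑ i, c i = 0 → ∑ i, ∑ j, M i j * c i * c j ≤ 0

lemma sum_sum_mul_mul_eq_dotProduct_mulVec (M : Matrix ι ι ℝ) (c : ι → ℝ) :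
    ∑ i, ∑ j, M i j * c i * c j = c ⬝ᵥ M *ᵥ c := by
  simp only [dotProduct, mulVec, Finset.mul_sum]
  exact Finset.sum_congr rfl fun i _ => Finset.sum_congr rfl fun j _ => by ring

theorem sum_sum_norm_sub_sq_mul_mul {E : Type*} [NormedAddCommGroup E] [InnerProductSpace ℝ E]
    (x : ι → E) {c : ι → ℝ} (hc : ∑ i, c i = 0) :
    ∑ i, ∑ j, ‖x i - x j‖ ^ 2 * c i * c j = -2 * ‖∑ i, c i • x i‖ ^ 2 := by
  have expand : ∀ i j, ‖x i - x j‖ ^ 2 * c i * c j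
      = ‖x i‖ ^ 2 * c i * c j + c i * (‖x j‖ ^ 2 * c j) - 2 * (c i * (c j * ⟪x j, x i⟫_ℝ)) := by
    intro i j
    rw [norm_sub_sq_real, real_inner_comm]
    ring
  rw [← real_inner_self_eq_norm_sq]
  simp only [expand, Finset.sum_add_distrib, Finset.sum_sub_distrib, ← Finset.mul_sum,
    ← Finset.sum_mul, hc, sum_inner, inner_sum, real_inner_smul_left, real_inner_smul_right]
  ring

theorem condNegSemidef_of_eq_norm_sub_sq {E : Type*} [NormedAddCommGroup E]
    [InnerProductSpace ℝ E] {x : ι → E}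
    (hx : ∀ i j, M i j = ‖x i - x j‖ ^ 2) : M.CondNegSemidef := by
  intro c hc
  simp only [hx, sum_sum_norm_sub_sq_mul_mul x hc]
  nlinarith [sq_nonneg ‖∑ i, c i • x i‖]

theorem PosSemidef.exists_eq_gram {𝕜 : Type*} [RCLike 𝕜] {G : Matrix ι ι 𝕜}
    (hG : G.PosSemidef) : ∃ x : ι → EuclideanSpace 𝕜 ι, G = gram 𝕜 x := by
  classical
  obtain ⟨B, rfl⟩ := CStarAlgebra.nonneg_iff_eq_star_mul_self.mp hG.nonneg
  refine ⟨fun i => WithLp.toLp 2 fun k => B k i, ?_⟩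
  ext i j
  simp [mul_apply, PiLp.inner_apply, mul_comm]

section ZeroSumProj

variable [DecidableEq ι]

/-- `c ↦ c - (∑ i, c i) • Pi.single b 1`, the projection onto the hyperplane `∑ i, c i = 0`
along `Pi.single b 1`. -/
def zeroSumProj (b : ι) : Matrix ι ι ℝ := 1 - vecMulVec (Pi.single b 1) fun _ => 1

lemma sum_zeroSumProj_mulVec (b : ι) (c : ι → ℝ) : ∑ i, (zeroSumProj b *ᵥ c) i = 0 := by
  simp [zeroSumProj, sub_mulVec, vecMulVec_mulVec, Finset.sum_sub_distrib, dotProduct,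
    ← Finset.sum_mul, Finset.sum_pi_single']

lemma basedGram_eq_smul (hM : M.IsSymm) {b : ι} (hb : M b b = 0) :
    basedGram M b = -(1 / 2 : ℝ) • ((zeroSumProj b)ᵀ * M * zeroSumProj b) := by
  ext i j
  simp [basedGram, zeroSumProj, sub_mul, mul_sub, mul_apply, vecMulVec, Pi.single_apply, hb,
    hM.apply b j]
  ring

end ZeroSumProj

lemma CondNegSemidef.posSemidef_basedGram (h : M.CondNegSemidef) (hM : M.IsSymm) {b : ι}
    (hb : M b b = 0) : (basedGram M b).PosSemidef := by
  classical
  refine .of_dotProduct_mulVec_nonneg (isHermitian_basedGram hM b) fun c => ?_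
  have hcompress : c ⬝ᵥ ((zeroSumProj b)ᵀ * M * zeroSumProj b) *ᵥ c
      = ∑ i, ∑ j, M i j * (zeroSumProj b *ᵥ c) i * (zeroSumProj b *ᵥ c) j := by
    rw [sum_sum_mul_mul_eq_dotProduct_mulVec, ← mulVec_mulVec, ← mulVec_mulVec, dotProduct_mulVec,
      vecMul_transpose]
  rw [star_trivial, basedGram_eq_smul hM hb, smul_mulVec, dotProduct_smul, hcompress, smul_eq_mul]
  nlinarith [h _ (sum_zeroSumProj_mulVec b c)]

theorem CondNegSemidef.exists_eq_norm_sub_sq (h : M.CondNegSemidef) (hM : M.IsSymm)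
    (hdiag : ∀ i, M i i = 0) : ∃ x : ι → EuclideanSpace ℝ ι, ∀ i j, M i j = ‖x i - x j‖ ^ 2 := by
  cases isEmpty_or_nonempty ι
  · exact ⟨isEmptyElim, isEmptyElim⟩
  obtain ⟨b⟩ := ‹Nonempty ι›
  obtain ⟨x, hx⟩ := (h.posSemidef_basedGram hM (hdiag b)).exists_eq_gram
  refine ⟨x, fun i j => ?_⟩
  rw [norm_sub_sq_real, ← real_inner_self_eq_norm_sq, ← real_inner_self_eq_norm_sq,
    ← basedGram_add_basedGram_sub hdiag b i j, hx]
  simp only [gram_apply]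
  ring

end Matrix

theorem condNegSemidef_iff_sq_euclidean_general {n : ℕ}
    (M : Matrix (Fin n) (Fin n) ℝ) (hsymm : M.IsSymm)
    (hdiag : ∀ i, M i i = 0) :
    (∀ c : Fin n → ℝ, (∑ i, c i) = 0 → ∑ i, ∑ j, M i j * c i * c j ≤ 0) ↔
    (∃ x : Fin n → EuclideanSpace ℝ (Fin n), ∀ i j, M i j = ‖x i - x j‖ ^ 2) :=
  ⟨fun h => Matrix.CondNegSemidef.exists_eq_norm_sub_sq h hsymm hdiag,
    fun ⟨_, hx⟩ => Matrix.condNegSemidef_of_eq_norm_sub_sq hx⟩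

/-- Schoenberg: M is conditionally negative semidefinite iff
m_ij = ‖x_i − x_j‖² for some vectors x_i ∈ ℝⁿ. -/
theorem condNegSemidef_iff_sq_euclidean {n : ℕ}
    (M : Matrix (Fin n) (Fin n) ℝ) (hsymm : M.IsSymm)
    (hdiag : ∀ i, M i i = 0) (hoff : ∀ i j, i ≠ j → 0 ≤ M i j) :
    (∀ c : Fin n → ℝ, (∑ i, c i) = 0 → ∑ i, ∑ j, M i j * c i * c j ≤ 0) ↔
    (∃ x : Fin n → EuclideanSpace ℝ (Fin n), ∀ i j, M i j = ‖x i - x j‖ ^ 2) :=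
  condNegSemidef_iff_sq_euclidean_general M hsymm hdiag
end

section
/- The bipartite metric K_{2,2} is Mossay–Tabuchi stable, and for every n ≥ 1 the metric K_{n,1} is Mossay–Tabuchi stable: in both cases the matrix Φ^{K_{n,m}}_t is positive semidefinite for every t ∈ (0,1). -/
/-!
Write `Φ = (1 - t²) I + t² (𝟙_A 𝟙_Aᵀ + 𝟙_B 𝟙_Bᵀ) + t (𝟙_A 𝟙_Bᵀ + 𝟙_B 𝟙_Aᵀ)` for the two sides `A`, `B`
of the bipartition. With `a`, `b` the sums of `x` over `A` and `B`, the quadratic form is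
`(1 - t²) ‖x‖² + t² (a² + b²) + 2 t a b`, and Cauchy–Schwarz `a² ≤ n ‖x_A‖²`, `b² ≤ m ‖x_B‖²` reduces
its nonnegativity to that of a binary quadratic form in `(a, b)`, i.e. to the discriminant condition
`n m t² ≤ (1 - t² + n t²) (1 - t² + m t²)`. For `K_{2,2}` this reads `4 t² ≤ (1 + t²)²`, and for
`K_{n,1}` it reads `n t² ≤ 1 - t² + n t²`.
-/

/-- The freeness-of-trade matrix of the bipartite metric `K_{n,m}`. -/
def PhiK (n m : ℕ) (t : ℝ) : Matrix (Fin (n + m)) (Fin (n + m)) ℝ :=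
  Matrix.of fun i j =>
    if i = j then 1 else if ((i : ℕ) < n ↔ (j : ℕ) < n) then t ^ 2 else t

open Matrix

theorem binary_form_nonneg {A B C : ℝ} (hA : 0 < A) (hB : B ^ 2 ≤ A * C) (a b : ℝ) :
    0 ≤ A * a ^ 2 + 2 * B * a * b + C * b ^ 2 := by
  have key : A * (A * a ^ 2 + 2 * B * a * b + C * b ^ 2) =
      (A * a + B * b) ^ 2 + (A * C - B ^ 2) * b ^ 2 := by ring
  refine (mul_nonneg_iff_of_pos_left hA).mp ?_
  rw [key]
  have := sq_nonneg b
  positivity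

theorem bipartite_form_nonneg {n m t a b u v : ℝ} (hn : 1 ≤ n) (hm : 1 ≤ m) (ht : t ^ 2 ≤ 1)
    (h : n * m * t ^ 2 ≤ (1 - t ^ 2 + n * t ^ 2) * (1 - t ^ 2 + m * t ^ 2))
    (ha : a ^ 2 ≤ n * u) (hb : b ^ 2 ≤ m * v) :
    0 ≤ (1 - t ^ 2) * (u + v) + t ^ 2 * (a ^ 2 + b ^ 2) + 2 * t * a * b := by
  have hs : 0 ≤ 1 - t ^ 2 := sub_nonneg.mpr ht
  have hP : 0 < 1 - t ^ 2 + n * t ^ 2 := by nlinarith [sq_nonneg t]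
  have hform := binary_form_nonneg (A := m * (1 - t ^ 2 + n * t ^ 2)) (B := n * m * t)
    (C := n * (1 - t ^ 2 + m * t ^ 2)) (by positivity)
    (by nlinarith [mul_le_mul_of_nonneg_left h (by positivity : 0 ≤ n * m)]) a b
  refine (mul_nonneg_iff_of_pos_left (by positivity : 0 < n * m)).mp ?_
  nlinarith [mul_nonneg (mul_nonneg (by positivity : 0 ≤ m) hs) (sub_nonneg.mpr ha),
    mul_nonneg (mul_nonneg (by positivity : 0 ≤ n) hs) (sub_nonneg.mpr hb)]

section PhiK

variable (n m : ℕ)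

def leftIndicator : Fin (n + m) → ℝ := fun i => if (i : ℕ) < n then 1 else 0

def rightIndicator : Fin (n + m) → ℝ := fun i => if (i : ℕ) < n then 0 else 1

theorem dotProduct_leftIndicator (x : Fin (n + m) → ℝ) :
    x ⬝ᵥ leftIndicator n m = ∑ i : Fin n, x (Fin.castAdd m i) := by
  simp [dotProduct, leftIndicator, Fin.sum_univ_add]

theorem dotProduct_rightIndicator (x : Fin (n + m) → ℝ) :
    x ⬝ᵥ rightIndicator n m = ∑ j : Fin m, x (Fin.natAdd n j) := by
  simp [dotProduct, rightIndicator, Fin.sum_univ_add]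

theorem dotProduct_self_eq_sum_add_sum (x : Fin (n + m) → ℝ) :
    x ⬝ᵥ x = ∑ i : Fin n, x (Fin.castAdd m i) ^ 2 + ∑ j : Fin m, x (Fin.natAdd n j) ^ 2 := by
  simp [dotProduct, Fin.sum_univ_add, sq]

theorem PhiK_eq_sum_vecMulVec (t : ℝ) :
    PhiK n m t = (1 - t ^ 2) • 1 +
      t ^ 2 • (vecMulVec (leftIndicator n m) (leftIndicator n m) +
        vecMulVec (rightIndicator n m) (rightIndicator n m)) +
      t • (vecMulVec (leftIndicator n m) (rightIndicator n m) +
        vecMulVec (rightIndicator n m) (leftIndicator n m)) := by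
  ext i j
  simp only [PhiK, of_apply, leftIndicator, rightIndicator, Matrix.add_apply, Matrix.smul_apply,
    one_apply, vecMulVec_apply, smul_eq_mul]
  rcases eq_or_ne i j with rfl | hij
  · by_cases hi : (i : ℕ) < n <;> simp [hi]
  · by_cases hi : (i : ℕ) < n <;> by_cases hj : (j : ℕ) < n <;> simp [hi, hj, hij]

theorem PhiK_isHermitian (t : ℝ) : (PhiK n m t).IsHermitian :=
  IsHermitian.ext fun i j => by simp only [PhiK, of_apply, star_trivial, eq_comm, iff_comm]

theorem dotProduct_PhiK_mulVec (t : ℝ) (x : Fin (n + m) → ℝ) :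
    x ⬝ᵥ (PhiK n m t *ᵥ x) = (1 - t ^ 2) * (x ⬝ᵥ x) +
      t ^ 2 * ((x ⬝ᵥ leftIndicator n m) ^ 2 + (x ⬝ᵥ rightIndicator n m) ^ 2) +
      2 * t * (x ⬝ᵥ leftIndicator n m) * (x ⬝ᵥ rightIndicator n m) := by
  simp only [PhiK_eq_sum_vecMulVec, add_mulVec, smul_mulVec, one_mulVec, vecMulVec_mulVec,
    dotProduct_add, dotProduct_smul, smul_eq_mul, op_smul_eq_mul, dotProduct_comm _ x]
  ring

variable {n m}

theorem PhiK_posSemidef_of_le (hn : 0 < n) (hm : 0 < m) {t : ℝ} (ht : t ^ 2 ≤ 1)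
    (h : n * m * t ^ 2 ≤ (1 - t ^ 2 + n * t ^ 2) * (1 - t ^ 2 + m * t ^ 2)) :
    (PhiK n m t).PosSemidef := by
  refine PosSemidef.of_dotProduct_mulVec_nonneg (PhiK_isHermitian n m t) fun x => ?_
  rw [star_trivial, dotProduct_PhiK_mulVec, dotProduct_self_eq_sum_add_sum,
    dotProduct_leftIndicator, dotProduct_rightIndicator]
  exact bipartite_form_nonneg (Nat.one_le_cast.mpr hn) (Nat.one_le_cast.mpr hm) ht h
    (by simpa using sq_sum_le_card_mul_sum_sq (s := .univ) (f := fun i => x (Fin.castAdd m i)))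
    (by simpa using sq_sum_le_card_mul_sum_sq (s := .univ) (f := fun j => x (Fin.natAdd n j)))

end PhiK

/-- K_{2,2} is Mossay–Tabuchi stable, and K_{n,1} is Mossay–Tabuchi
stable for every n ≥ 1. -/
theorem PhiK_small_MT_stable :
    (∀ t ∈ Set.Ioo (0 : ℝ) 1, (PhiK 2 2 t).PosSemidef) ∧
    (∀ n : ℕ, 1 ≤ n → ∀ t ∈ Set.Ioo (0 : ℝ) 1, (PhiK n 1 t).PosSemidef) := by
  constructor
  · rintro t ⟨ht0, ht1⟩
    refine PhiK_posSemidef_of_le two_pos two_pos (pow_le_one₀ ht0.le ht1.le) ?_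
    push_cast
    nlinarith [sq_nonneg (1 - t ^ 2)]
  · rintro n hn t ⟨ht0, ht1⟩
    have ht : t ^ 2 ≤ 1 := pow_le_one₀ ht0.le ht1.le
    refine PhiK_posSemidef_of_le hn one_pos ht ?_
    push_cast
    linarith
end

section
/- Let t ∈ (1/2, 1) and let Φ be the 6×6 matrix Φ^{K_{3,3}}_t (diagonal entries 1, entries t² between distinct indices within {1,2,3} and within {4,5,6}, and entries t between an index in {1,2,3} and an index in {4,5,6}), and take all country sizes L_i = 1. If ε > (1+2t)(1+t)/((2t−1)(1−t)), then the equilibrium system v_i = ∑_{j=1}^{6} φ_ij·v_j^{−ε} with all v_i > 0 has at least two distinct solutions, i.e., perverse equilibria exist. -/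
/-!
Look for equilibria that are constant on each side of the bipartition: `a` on the first side and
`b = r a` on the second. With `A = 1 + (n - 1) t²` and `B = n t` the row sums of `Φ` within and
across the sides, the two block equations become `a ^ (1 + ε) = A + B r ^ (-ε)` together with
`g r = A (r ^ (1 + ε) - 1) + B (r - r ^ ε) = 0`. The root `r = 1` is the symmetric equilibrium.
Since `g' 1 = A (1 + ε) + B (1 - ε)`, which is negative exactly when `ε > (A + B) / (B - A)`
(for `n = 3` this is the threshold of the theorem), `g` is negative just right of `1` and positive
for large `r`, so the intermediate value theorem gives a second root `r > 1`, hence an asymmetric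
equilibrium.
-/

open Real Set Matrix

-- The Mossay–Tabuchi equation with all country sizes `1`.
def IsEquilibrium {ι : Type*} [Fintype ι] (Φ : Matrix ι ι ℝ) (ε : ℝ) (v : ι → ℝ) : Prop :=
  (∀ i, 0 < v i) ∧ v = Φ *ᵥ fun j => v j ^ (-ε)

section PhiK
variable {n m : ℕ} {t : ℝ}

@[simp] lemma PhiK_castAdd_castAdd (i j : Fin n) :
    PhiK n m t (Fin.castAdd m i) (Fin.castAdd m j) = if i = j then 1 else t ^ 2 := by
  simp [PhiK, Fin.ext_iff]

@[simp] lemma PhiK_natAdd_natAdd (i j : Fin m) :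
    PhiK n m t (Fin.natAdd n i) (Fin.natAdd n j) = if i = j then 1 else t ^ 2 := by
  simp [PhiK, Fin.ext_iff]

@[simp] lemma PhiK_castAdd_natAdd (i : Fin n) (j : Fin m) :
    PhiK n m t (Fin.castAdd m i) (Fin.natAdd n j) = t := by
  simp [PhiK, Fin.ext_iff]; omega

@[simp] lemma PhiK_natAdd_castAdd (i : Fin m) (j : Fin n) :
    PhiK n m t (Fin.natAdd n i) (Fin.castAdd m j) = t := by
  simp [PhiK, Fin.ext_iff]; omega

end PhiK

def blockVec (n m : ℕ) (x y : ℝ) : Fin (n + m) → ℝ :=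
  Fin.append (fun _ : Fin n => x) (fun _ : Fin m => y)

section blockVec
variable {n m : ℕ} {x y : ℝ}

lemma blockVec_pos (hx : 0 < x) (hy : 0 < y) (i : Fin (n + m)) : 0 < blockVec n m x y i := by
  refine Fin.addCases (fun i => ?_) (fun i => ?_) i <;> simpa [blockVec]

lemma comp_blockVec (f : ℝ → ℝ) : f ∘ blockVec n m x y = blockVec n m (f x) (f y) := by
  ext i
  refine Fin.addCases (fun i => ?_) (fun i => ?_) i <;> simp [blockVec]

end blockVec

lemma Fin.sum_ite_eq_else {n : ℕ} (i : Fin n) (a b : ℝ) :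
    ∑ k, (if i = k then a else b) = a + (n - 1) * b := by
  have (k : Fin n) : (if i = k then a else b) = b + if i = k then a - b else 0 := by
    split_ifs <;> ring
  simp only [this, Finset.sum_add_distrib, Fintype.sum_ite_eq, Finset.sum_const,
    Finset.card_univ, Fintype.card_fin, nsmul_eq_mul]
  ring

theorem PhiK_mulVec_blockVec (n m : ℕ) (t x y : ℝ) :
    PhiK n m t *ᵥ blockVec n m x y =
      blockVec n m ((1 + (n - 1) * t ^ 2) * x + m * t * y)
        (n * t * x + (1 + (m - 1) * t ^ 2) * y) := by
  ext i
  refine Fin.addCases (fun i => ?_) (fun i => ?_) i <;>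
  simp only [mulVec, dotProduct, Fin.sum_univ_add, blockVec, Fin.append_left, Fin.append_right,
    PhiK_castAdd_castAdd, PhiK_natAdd_natAdd, PhiK_castAdd_natAdd, PhiK_natAdd_castAdd,
    ← Finset.sum_mul, Fin.sum_ite_eq_else, Finset.sum_const, Finset.card_univ, Fintype.card_fin,
    nsmul_eq_mul]

lemma isEquilibrium_PhiK_blockVec {n : ℕ} {t ε a b : ℝ} (ha : 0 < a) (hb : 0 < b)
    (hA : a = (1 + (n - 1) * t ^ 2) * a ^ (-ε) + n * t * b ^ (-ε))
    (hB : b = n * t * a ^ (-ε) + (1 + (n - 1) * t ^ 2) * b ^ (-ε)) :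
    IsEquilibrium (PhiK n n t) ε (blockVec n n a b) := by
  refine ⟨blockVec_pos ha hb, ?_⟩
  rw [show (fun j => blockVec n n a b j ^ (-ε)) = blockVec n n (a ^ (-ε)) (b ^ (-ε)) from
    comp_blockVec (· ^ (-ε)), PhiK_mulVec_blockVec, ← hA, ← hB]

noncomputable def blockRatioResidual (A B ε r : ℝ) : ℝ :=
  A * (r ^ (1 + ε) - 1) + B * (r - r ^ ε)

section blockRatioResidual
variable {A B ε : ℝ}

@[simp] lemma blockRatioResidual_one : blockRatioResidual A B ε 1 = 0 := by
  simp [blockRatioResidual]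

lemma hasDerivAt_blockRatioResidual_one :
    HasDerivAt (blockRatioResidual A B ε) (A * (1 + ε) + B * (1 - ε)) 1 := by
  have hpow (p : ℝ) : HasDerivAt (fun r : ℝ => r ^ p) p 1 := by
    simpa using hasDerivAt_rpow_const (x := 1) (p := p) (Or.inl one_ne_zero)
  exact (((hpow (1 + ε)).sub_const 1).const_mul A).add
    (((hasDerivAt_id 1).sub (hpow ε)).const_mul B)

lemma continuousOn_blockRatioResidual : ContinuousOn (blockRatioResidual A B ε) (Ioi 0) := by
  intro x (hx : 0 < x)
  apply ContinuousAt.continuousWithinAt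
  unfold blockRatioResidual
  fun_prop (disch := exact Or.inl hx.ne')

lemma blockRatioResidual_pos {R : ℝ} (hR : 0 < R) (hBA : B < A * R) (hAB : A < B * R) :
    0 < blockRatioResidual A B ε R := by
  have : blockRatioResidual A B ε R = R ^ ε * (A * R - B) + (B * R - A) := by
    rw [blockRatioResidual, rpow_add hR, rpow_one]; ring
  rw [this]
  have := rpow_pos_of_pos hR ε
  nlinarith

lemma exists_one_lt_blockRatioResidual_eq_zero (hA : 0 < A) (hB : 0 < B)
    (hd : A * (1 + ε) + B * (1 - ε) < 0) :
    ∃ r, 1 < r ∧ blockRatioResidual A B ε r = 0 := by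
  obtain ⟨r₀, hslope, hr₀⟩ : ∃ r₀, slope (blockRatioResidual A B ε) 1 r₀ < 0 ∧ 1 < r₀ :=
    ((hasDerivAt_blockRatioResidual_one.hasDerivWithinAt.liminf_right_slope_le hd
      ).and_eventually self_mem_nhdsWithin).exists
  have hneg : blockRatioResidual A B ε r₀ < 0 := by
    rw [slope_def_field, blockRatioResidual_one, sub_zero] at hslope
    exact (div_neg_iff.mp hslope).elim (fun h => by linarith [h.2]) (·.1)
  have hpos : 0 < blockRatioResidual A B ε (r₀ + B / A + A / B) := by
    have : 0 < A * r₀ := by nlinarith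
    have : 0 < B * r₀ := by nlinarith
    apply blockRatioResidual_pos (by positivity)
    · have : A * (r₀ + B / A + A / B) = A * r₀ + B + A ^ 2 / B := by field_simp
      rw [this]; linarith [show 0 < A ^ 2 / B by positivity]
    · have : B * (r₀ + B / A + A / B) = B * r₀ + B ^ 2 / A + A := by field_simp
      rw [this]; linarith [show 0 < B ^ 2 / A by positivity]
  have hle : r₀ ≤ r₀ + B / A + A / B := by linarith [div_pos hA hB, div_pos hB hA]
  obtain ⟨r, hr, hr0⟩ := intermediate_value_Icc hle
    (continuousOn_blockRatioResidual.mono fun x hx => show 0 < x by linarith [hx.1])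
    ⟨hneg.le, hpos.le⟩
  exact ⟨r, by linarith [hr.1], hr0⟩

end blockRatioResidual

lemma self_eq_rpow_one_add_mul_rpow_neg {x : ℝ} (hx : 0 < x) (ε : ℝ) :
    x = x ^ (1 + ε) * x ^ (-ε) := by
  rw [← rpow_add hx]; simp

lemma exists_block_solution_of_residual_eq_zero {A B ε r : ℝ} (hA : 0 < A) (hB : 0 ≤ B)
    (hε : 1 + ε ≠ 0) (hr : 0 < r) (hres : blockRatioResidual A B ε r = 0) :
    ∃ a, 0 < a ∧ a = A * a ^ (-ε) + B * (r * a) ^ (-ε) ∧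
      r * a = B * a ^ (-ε) + A * (r * a) ^ (-ε) := by
  have hC : 0 < A + B * r ^ (-ε) := by positivity
  obtain ⟨a, ha, ha_pow⟩ : ∃ a, 0 < a ∧ a ^ (1 + ε) = A + B * r ^ (-ε) :=
    ⟨_, by positivity, rpow_inv_rpow hC.le hε⟩
  have hra : (r * a) ^ (-ε) = r ^ (-ε) * a ^ (-ε) := mul_rpow hr.le ha.le
  refine ⟨a, ha, ?_, ?_⟩
  · calc a = a ^ (1 + ε) * a ^ (-ε) := self_eq_rpow_one_add_mul_rpow_neg ha ε
      _ = A * a ^ (-ε) + B * (r * a) ^ (-ε) := by rw [ha_pow, hra]; ring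
  · have hr_pow : r ^ (1 + ε) * (A + B * r ^ (-ε)) = A + B * r ^ ε := by
      have : r ^ (1 + ε) * r ^ (-ε) = r := by rw [← rpow_add hr]; simp
      rw [blockRatioResidual] at hres
      linear_combination hres + B * this
    have hr_cancel : r ^ ε * r ^ (-ε) = 1 := by rw [← rpow_add hr]; simp
    calc r * a = (r * a) ^ (1 + ε) * (r * a) ^ (-ε) :=
          self_eq_rpow_one_add_mul_rpow_neg (mul_pos hr ha) ε
      _ = (A + B * r ^ ε) * (r * a) ^ (-ε) := by
          rw [mul_rpow hr.le ha.le (z := 1 + ε), ha_pow, hr_pow]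
      _ = B * a ^ (-ε) + A * (r * a) ^ (-ε) := by
          rw [hra]; linear_combination (B * a ^ (-ε)) * hr_cancel

theorem exists_two_isEquilibrium_PhiK {n : ℕ} (hn : 0 < n) {t ε : ℝ} (ht : 0 < t)
    (hε : 1 + ε ≠ 0) (hd : (1 + (n - 1) * t ^ 2) * (1 + ε) + n * t * (1 - ε) < 0) :
    ∃ v v', IsEquilibrium (PhiK n n t) ε v ∧ IsEquilibrium (PhiK n n t) ε v' ∧ v ≠ v' := by
  have hA : 0 < 1 + (n - 1) * t ^ 2 := by
    have : (1 : ℝ) ≤ n := by exact_mod_cast hn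
    positivity
  have hB : 0 < n * t := by positivity
  obtain ⟨r, hr, hres⟩ := exists_one_lt_blockRatioResidual_eq_zero hA hB hd
  obtain ⟨a, ha, haA, haB⟩ :=
    exists_block_solution_of_residual_eq_zero hA hB.le hε (by linarith) hres
  obtain ⟨c, hc, hcA, hcB⟩ :=
    exists_block_solution_of_residual_eq_zero hA hB.le hε one_pos blockRatioResidual_one
  refine ⟨_, _, isEquilibrium_PhiK_blockVec ha (by positivity) haA haB,
    isEquilibrium_PhiK_blockVec hc (by positivity) hcA hcB, fun h => ?_⟩
  have h₁ := congrFun h (Fin.castAdd n ⟨0, hn⟩)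
  have h₂ := congrFun h (Fin.natAdd n ⟨0, hn⟩)
  simp only [blockVec, Fin.append_left, Fin.append_right] at h₁ h₂
  nlinarith

/-- for the 6×6 matrix Φ^{K_{3,3}}_t with t ∈ (1/2,1), all country sizes 1,
and ε > (1+2t)(1+t)/((2t−1)(1−t)), the equilibrium system v_i = ∑_j φ_ij·v_j^{−ε} with
v_i > 0 has at least two distinct solutions: perverse equilibria exist. -/
theorem K33_perverse_equilibria (t : ℝ) (ht : t ∈ Set.Ioo (1 / 2 : ℝ) 1)
    (ε : ℝ) (hε : (1 + 2 * t) * (1 + t) / ((2 * t - 1) * (1 - t)) < ε) :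
    ∃ v v' : Fin (3 + 3) → ℝ,
      (∀ i, 0 < v i) ∧ (∀ i, 0 < v' i) ∧ v ≠ v' ∧
      (∀ i, v i = ∑ j, PhiK 3 3 t i j * (v j) ^ (-ε)) ∧
      (∀ i, v' i = ∑ j, PhiK 3 3 t i j * (v' j) ^ (-ε)) := by
  obtain ⟨ht₁, ht₂⟩ := ht
  have hgap : 0 < (2 * t - 1) * (1 - t) := mul_pos (by linarith) (by linarith)
  have hε_mul := (div_lt_iff₀ hgap).mp hε
  have hεpos : 0 < ε := lt_of_le_of_lt (by positivity) hε
  obtain ⟨v, v', ⟨hv, hv_eq⟩, ⟨hv', hv'_eq⟩, hne⟩ :=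
    exists_two_isEquilibrium_PhiK (n := 3) (t := t) (ε := ε) (by norm_num) (by linarith)
      (by linarith) (by push_cast; nlinarith)
  exact ⟨v, v', hv, hv', hne, congrFun hv_eq, congrFun hv'_eq⟩
end
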